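/- Let λ > 0, k > 0, and let η̃ : ℝ → ℝ be a smooth even function with support contained in [−1/λ, 1/λ] and equal to 1 on [−1/(2λ), 1/(2λ)]. Define η^k₊(s) = ∫₀^∞ ω^k η̃(ω) e^{−iωs} dω and j^k_{n+}(s) = ∫₀^∞ ω^k [η̃(2ⁿω) − η̃(2^{n+1}ω)] e^{−iωs} dω for n ≥ 0; these are integrable functions on ℝ. Let B be a bounded operator on H and define the bounded operators B^k_< ψ = ∫ η^k₊(τ)·B(τ·e₀)ψ dτ and B^k_n ψ = ∫ j^k_{n+}(τ)·B(τ·e₀)ψ dτ, with e₀ = (1,0,0,0). Then for every integer N ≥ 1: ‖B^k_< − Σ_{n=0}^{N−1} B^k_n‖ ≤ 2^{−Nk}·‖η^k₊‖_{L¹(ℝ)}·‖B‖. -/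

import Mathlib

noncomputable section

open ContinuousLinearMap MeasureTheory

/-- Minkowski space modeled as `ℝ⁴` with the Euclidean structure. -/
abbrev M4 : Type := EuclideanSpace ℝ (Fin 4)

/-- The time-axis unit vector `e₀ = (1,0,0,0)`. -/
def e0 : M4 := EuclideanSpace.single 0 1

/-- `η^k₊(s) = ∫₀^∞ ω^k η̃(ω) e^{−iωs} dω`. -/
def etak (k : ℝ) (ηt : ℝ → ℝ) (s : ℝ) : ℂ :=
  ∫ ω in Set.Ioi (0 : ℝ), ((ω ^ k * ηt ω : ℝ) : ℂ) * Complex.exp (-(Complex.I * ω * s))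

/-- `j^k_{n+}(s) = ∫₀^∞ ω^k [η̃(2ⁿω) − η̃(2^{n+1}ω)] e^{−iωs} dω`. -/
def jk (k : ℝ) (ηt : ℝ → ℝ) (n : ℕ) (s : ℝ) : ℂ :=
  ∫ ω in Set.Ioi (0 : ℝ),
    ((ω ^ k * (ηt (2 ^ n * ω) - ηt (2 ^ (n + 1) * ω)) : ℝ) : ℂ) *
      Complex.exp (-(Complex.I * ω * s))

/-- Approximation of `B^k_<` by the dyadic pieces `B^k_n`:
`‖B^k_< − Σ_{n<N} B^k_n‖ ≤ 2^{−Nk} ‖η^k₊‖_{L¹} ‖B‖`. -/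
theorem stmt10 {H : Type*} [NormedAddCommGroup H] [InnerProductSpace ℂ H] [CompleteSpace H]
    (lam k : ℝ) (hlam : 0 < lam) (hk : 0 < k)
    (ηt : ℝ → ℝ) (hsm : ContDiff ℝ (⊤ : ℕ∞) ηt) (heven : ∀ ω, ηt (-ω) = ηt ω)
    (hsupp : Function.support ηt ⊆ Set.Icc (-(1 / lam)) (1 / lam))
    (hone : ∀ ω ∈ Set.Icc (-(1 / (2 * lam))) (1 / (2 * lam)), ηt ω = 1)
    (hηint : Integrable (etak k ηt)) (hjint : ∀ n : ℕ, Integrable (jk k ηt n))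
    (U : M4 → H →L[ℂ] H)
    (hU0 : U 0 = 1) (hUadd : ∀ x y, U (x + y) = U x * U y)
    (hUadj : ∀ x, adjoint (U x) = U (-x)) (hUcont : ∀ ψ : H, Continuous fun x => U x ψ)
    (B : H →L[ℂ] H)
    (Bless : H →L[ℂ] H)
    (hBless : ∀ ψ : H, Bless ψ = ∫ τ : ℝ, etak k ηt τ • ((U (τ • e0) * B * U (-(τ • e0))) ψ))
    (Bn : ℕ → H →L[ℂ] H)
    (hBn : ∀ (n : ℕ) (ψ : H),
      Bn n ψ = ∫ τ : ℝ, jk k ηt n τ • ((U (τ • e0) * B * U (-(τ • e0))) ψ)) :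
    ∀ N : ℕ, 1 ≤ N →
      ‖Bless - ∑ n ∈ Finset.range N, Bn n‖
        ≤ (2 : ℝ) ^ (-((N : ℝ) * k)) * (∫ s : ℝ, ‖etak k ηt s‖) * ‖B‖ := by
  intro N hN
  have hcpos : (0 : ℝ) < (2 : ℝ) ^ N := by positivity
  set c : ℝ := (2 : ℝ) ^ N with hc
  -- continuity of `ω ↦ ω ^ k`
  have hrk : Continuous fun ω : ℝ => ω ^ k :=
    continuous_iff_continuousAt.2 fun x => Real.continuousAt_rpow_const x k (Or.inr hk.le)
  -- integrability of the basic integrands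
  have hInt : ∀ (b s : ℝ), 0 < b →
      IntegrableOn (fun ω : ℝ => ((ω ^ k * ηt (b * ω) : ℝ) : ℂ) *
        Complex.exp (-(Complex.I * ω * s))) (Set.Ioi 0) := by
    intro b s hb
    apply Integrable.integrableOn
    apply Continuous.integrable_of_hasCompactSupport
    · apply Continuous.mul
      · exact Complex.continuous_ofReal.comp
          (hrk.mul (hsm.continuous.comp (continuous_const.mul continuous_id)))
      · exact Complex.continuous_exp.comp (by fun_prop)
    · apply HasCompactSupport.intro (isCompact_Icc (a := -(1 / lam / b)) (b := 1 / lam / b))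
      intro x hx
      have h0 : ηt (b * x) = 0 := by
        by_contra h
        have hmem := hsupp h
        apply hx
        constructor
        · rw [show -(1 / lam / b) = -(1 / lam) / b from (neg_div _ _).symm, div_le_iff₀ hb]
          rw [mul_comm]
          exact hmem.1
        · rw [le_div_iff₀ hb, mul_comm]
          exact hmem.2
      simp [h0]
  have hjIntOn : ∀ (M : ℕ) (s : ℝ),
      IntegrableOn (fun ω : ℝ =>
        ((ω ^ k * (ηt (2 ^ M * ω) - ηt (2 ^ (M + 1) * ω)) : ℝ) : ℂ) *
          Complex.exp (-(Complex.I * ω * s))) (Set.Ioi 0) := by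
    intro M s
    have h := (hInt (2 ^ M) s (by positivity)).sub (hInt (2 ^ (M + 1)) s (by positivity))
    have heq : (fun ω : ℝ =>
        ((ω ^ k * (ηt (2 ^ M * ω) - ηt (2 ^ (M + 1) * ω)) : ℝ) : ℂ) *
          Complex.exp (-(Complex.I * ω * s)))
        = fun ω : ℝ =>
          ((ω ^ k * ηt (2 ^ M * ω) : ℝ) : ℂ) * Complex.exp (-(Complex.I * ω * s)) -
          ((ω ^ k * ηt (2 ^ (M + 1) * ω) : ℝ) : ℂ) * Complex.exp (-(Complex.I * ω * s)) := by
      funext ω; push_cast; ring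
    rw [heq]; exact h
  -- telescoping
  have tele : ∀ (M : ℕ) (s : ℝ),
      etak k ηt s - ∑ n ∈ Finset.range M, jk k ηt n s
        = ∫ ω in Set.Ioi (0 : ℝ), (((ω : ℝ) ^ k * ηt ((2 : ℝ) ^ M * ω) : ℝ) : ℂ) *
            Complex.exp (-(Complex.I * ω * s)) := by
    intro M s
    induction M with
    | zero => simp [etak]
    | succ M ih =>
      rw [Finset.sum_range_succ, ← sub_sub, ih, jk,
        ← integral_sub (hInt ((2 : ℝ) ^ M) s (by positivity)) (hjIntOn M s)]
      apply setIntegral_congr_fun measurableSet_Ioi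
      intro ω _
      push_cast
      ring
  -- scaling
  have scal : ∀ s : ℝ,
      (∫ ω in Set.Ioi (0 : ℝ), (((ω : ℝ) ^ k * ηt (c * ω) : ℝ) : ℂ) *
          Complex.exp (-(Complex.I * ω * s)))
        = ((c ^ (-k) * c⁻¹ : ℝ) : ℂ) * etak k ηt (s / c) := by
    intro s
    have hcC : (c : ℂ) ≠ 0 := Complex.ofReal_ne_zero.mpr hcpos.ne'
    set F : ℝ → ℂ := fun u =>
      ((u ^ k * ηt u : ℝ) : ℂ) * Complex.exp (-(Complex.I * u * ((s : ℂ) / (c : ℂ)))) with hF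
    have h1 := integral_comp_mul_left_Ioi F 0 hcpos
    rw [mul_zero] at h1
    have h2 : (∫ x in Set.Ioi (0 : ℝ), F (c * x))
        = ((c ^ k : ℝ) : ℂ) * ∫ ω in Set.Ioi (0 : ℝ), ((ω ^ k * ηt (c * ω) : ℝ) : ℂ) *
            Complex.exp (-(Complex.I * ω * s)) := by
      rw [← integral_const_mul]
      apply setIntegral_congr_fun measurableSet_Ioi
      intro x hx
      have hx0 : (0 : ℝ) < x := hx
      show F (c * x)
        = ((c ^ k : ℝ) : ℂ) * (((x ^ k * ηt (c * x) : ℝ) : ℂ) * Complex.exp (-(Complex.I * x * s)))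
      simp only [hF]
      rw [Real.mul_rpow hcpos.le hx0.le]
      have harg : -(Complex.I * ((c * x : ℝ) : ℂ) * ((s : ℂ) / (c : ℂ)))
          = -(Complex.I * ((x : ℝ) : ℂ) * ((s : ℝ) : ℂ)) := by
        push_cast
        field_simp
      rw [harg]
      push_cast
      ring
    have h3 : (∫ x in Set.Ioi (0 : ℝ), F x) = etak k ηt (s / c) := by
      simp only [hF, etak]
      apply setIntegral_congr_fun measurableSet_Ioi
      intro x _
      push_cast
      ring
    rw [h2, h3] at h1
    have hckC : ((c ^ k : ℝ) : ℂ) ≠ 0 := by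
      simp only [ne_eq, Complex.ofReal_eq_zero]
      positivity
    rw [Real.rpow_neg hcpos.le, Complex.ofReal_mul, Complex.ofReal_inv, Complex.ofReal_inv]
    rw [Complex.real_smul, Complex.ofReal_inv] at h1
    apply mul_left_cancel₀ hckC
    rw [h1]
    field_simp
  -- norm of U is at most 1
  have hUle : ∀ x : M4, ‖U x‖ ≤ 1 := by
    intro x
    have h1 : ‖U x‖ * ‖U x‖ = ‖ContinuousLinearMap.adjoint (U x) ∘L U x‖ :=
      (ContinuousLinearMap.norm_adjoint_comp_self (U x)).symm
    have h2 : ContinuousLinearMap.adjoint (U x) ∘L U x = 1 := by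
      have h3 := hUadd (-x) x
      rw [neg_add_cancel, hU0] at h3
      rw [hUadj]
      exact h3.symm
    rw [h2] at h1
    have h4 : ‖(1 : H →L[ℂ] H)‖ ≤ 1 := ContinuousLinearMap.norm_id_le
    nlinarith [norm_nonneg (U x)]
  have hI0 : 0 ≤ ∫ s : ℝ, ‖etak k ηt s‖ := integral_nonneg fun s => norm_nonneg _
  apply ContinuousLinearMap.opNorm_le_bound
  · have h5 : (0 : ℝ) ≤ (2 : ℝ) ^ (-((N : ℝ) * k)) := by positivity
    exact mul_nonneg (mul_nonneg h5 hI0) (norm_nonneg B)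
  intro ψ
  set v : ℝ → H := fun τ => (U (τ • e0) * B * U (-(τ • e0))) ψ with hv
  have hvle : ∀ τ : ℝ, ‖v τ‖ ≤ ‖B‖ * ‖ψ‖ := by
    intro τ
    have h1 := (U (τ • e0) * B * U (-(τ • e0))).le_opNorm ψ
    have h2 : ‖U (τ • e0) * B * U (-(τ • e0))‖ ≤ ‖B‖ := by
      have ha := hUle (τ • e0)
      have hb := hUle (-(τ • e0))
      have h3 : ‖U (τ • e0) * B * U (-(τ • e0))‖ ≤ ‖U (τ • e0) * B‖ * ‖U (-(τ • e0))‖ :=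
        norm_mul_le _ _
      have h4 : ‖U (τ • e0) * B‖ ≤ ‖U (τ • e0)‖ * ‖B‖ := norm_mul_le _ _
      nlinarith [norm_nonneg (U (τ • e0) * B), norm_nonneg B, norm_nonneg (U (τ • e0))]
    calc ‖v τ‖ ≤ ‖U (τ • e0) * B * U (-(τ • e0))‖ * ‖ψ‖ := h1
      _ ≤ ‖B‖ * ‖ψ‖ := mul_le_mul_of_nonneg_right h2 (norm_nonneg ψ)
  -- continuity of v
  have hvcont : Continuous v := by
    set φ : ℝ → H := fun τ => B (U (-(τ • e0)) ψ) with hφdef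
    have hsm0 : Continuous fun τ : ℝ => τ • e0 := continuous_id.smul continuous_const
    have hφ : Continuous φ := B.continuous.comp ((hUcont ψ).comp hsm0.neg)
    rw [continuous_iff_continuousAt]
    intro t0
    rw [ContinuousAt, tendsto_iff_norm_sub_tendsto_zero]
    have key : ∀ τ : ℝ, ‖v τ - v t0‖ ≤
        ‖φ τ - φ t0‖ + ‖U (τ • e0) (φ t0) - U (t0 • e0) (φ t0)‖ := by
      intro τ
      have hdec : v τ - v t0 = U (τ • e0) (φ τ - φ t0) +
          (U (τ • e0) (φ t0) - U (t0 • e0) (φ t0)) := by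
        simp only [hv, hφdef, ContinuousLinearMap.mul_apply, map_sub]
        abel
      rw [hdec]
      refine le_trans (norm_add_le _ _) (add_le_add ?_ le_rfl)
      calc ‖U (τ • e0) (φ τ - φ t0)‖ ≤ ‖U (τ • e0)‖ * ‖φ τ - φ t0‖ := le_opNorm _ _
        _ ≤ 1 * ‖φ τ - φ t0‖ := mul_le_mul_of_nonneg_right (hUle _) (norm_nonneg _)
        _ = ‖φ τ - φ t0‖ := one_mul _
    have hbd : Continuous fun τ : ℝ =>
        ‖φ τ - φ t0‖ + ‖U (τ • e0) (φ t0) - U (t0 • e0) (φ t0)‖ :=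
      ((hφ.sub continuous_const).norm).add
        ((((hUcont (φ t0)).comp hsm0).sub continuous_const).norm)
    have h0 : Filter.Tendsto (fun τ : ℝ =>
        ‖φ τ - φ t0‖ + ‖U (τ • e0) (φ t0) - U (t0 • e0) (φ t0)‖) (nhds t0) (nhds 0) := by
      have h6 := hbd.tendsto t0
      simpa using h6
    exact squeeze_zero (fun τ => norm_nonneg _) key h0
  -- integrability of the vector-valued integrands
  have hintg : ∀ f : ℝ → ℂ, Integrable f → Integrable fun τ => f τ • v τ := by
    intro f hf
    refine Integrable.mono' (hf.norm.mul_const (‖B‖ * ‖ψ‖))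
      (hf.aestronglyMeasurable.smul hvcont.aestronglyMeasurable) ?_
    filter_upwards with τ
    rw [norm_smul]
    exact mul_le_mul_of_nonneg_left (hvle τ) (norm_nonneg _)
  -- main computation
  have hsum : (∑ n ∈ Finset.range N, Bn n) ψ
      = ∫ τ : ℝ, (∑ n ∈ Finset.range N, jk k ηt n τ) • v τ := by
    rw [ContinuousLinearMap.sum_apply]
    have h7 : ∀ n ∈ Finset.range N, Bn n ψ = ∫ τ : ℝ, jk k ηt n τ • v τ := fun n _ => hBn n ψ
    rw [Finset.sum_congr rfl h7, ← integral_finset_sum _ (fun n _ => hintg _ (hjint n))]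
    congr 1
    funext τ
    rw [Finset.sum_smul]
  have hdiff : (Bless - ∑ n ∈ Finset.range N, Bn n) ψ
      = ∫ τ : ℝ, (((c ^ (-k) * c⁻¹ : ℝ) : ℂ) * etak k ηt (τ / c)) • v τ := by
    rw [ContinuousLinearMap.sub_apply, hBless, hsum,
      ← integral_sub (hintg _ hηint) (hintg _ (integrable_finset_sum _ fun n _ => hjint n))]
    congr 1
    funext τ
    rw [← sub_smul, tele N τ, ← hc, scal τ]
  rw [hdiff]
  have hrpos : (0 : ℝ) ≤ c ^ (-k) * c⁻¹ := by positivity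
  have hIntg2 : Integrable fun τ : ℝ =>
      c ^ (-k) * c⁻¹ * ‖etak k ηt (τ / c)‖ * (‖B‖ * ‖ψ‖) :=
    ((hηint.comp_div hcpos.ne').norm.const_mul _).mul_const _
  have hck2 : c ^ (-k) = (2 : ℝ) ^ (-((N : ℝ) * k)) := by
    rw [hc, ← Real.rpow_natCast (2 : ℝ) N, ← Real.rpow_mul (by norm_num : (0 : ℝ) ≤ 2),
      mul_neg]
  refine le_trans (norm_integral_le_of_norm_le hIntg2 ?_) (le_of_eq ?_)
  · filter_upwards with τ
    rw [norm_smul, norm_mul, Complex.norm_real, Real.norm_eq_abs, abs_of_nonneg hrpos]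
    exact mul_le_mul_of_nonneg_left (hvle τ) (mul_nonneg hrpos (norm_nonneg _))
  · rw [integral_mul_const, integral_const_mul,
      Measure.integral_comp_div (fun s : ℝ => ‖etak k ηt s‖) c,
      smul_eq_mul, abs_of_pos hcpos, hck2]
    field_simp
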